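/- Let P(·|·) be a Markov transition kernel on a finite alphabet A with every transition probability at least δ > 0, and for a string t define P(t | t_1 = a) = ∏_{i=2}^{|t|} P(t_i | t_{i-1}) with t_1 = a. Then for every j ≥ 0 and a ∈ A, the level set S_j^a = { t : (1-δ)^{j+1} < P(t | t_1 = a) ≤ (1-δ)^j } has cardinality at most (1-δ)^{-(j+1)}. -/

import Mathlib

open Finset Real

/-- `condProb P a t` is the conditional probability of the continuation `t` of a string
whose current (first) character is `a`, under the Markov kernel `P` (`P a b = P(b|a)`). -/
noncomputable def condProb {A : Type*} (P : A → A → ℝ) : A → List A → ℝ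
  | _, [] => 1
  | a, b :: l => P a b * condProb P b l

namespace StmtAux

variable {A : Type*} [Fintype A]

/-- All lists of length `n`. -/
def allLists (A : Type*) [Fintype A] [DecidableEq A] : ℕ → Finset (List A)
  | 0 => {[]}
  | n + 1 => (Finset.univ ×ˢ allLists A n).image (fun p => p.1 :: p.2)

lemma mem_allLists [DecidableEq A] {n : ℕ} {l : List A} :
    l ∈ allLists A n ↔ l.length = n := by
  induction n generalizing l with
  | zero => simp [allLists, List.length_eq_zero_iff]
  | succ n ih =>
    simp only [allLists, Finset.mem_image, Finset.mem_product]
    constructor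
    · rintro ⟨⟨b, u⟩, ⟨-, hu⟩, rfl⟩
      simp [ih.mp hu]
    · intro hl
      cases l with
      | nil => simp at hl
      | cons b u => exact ⟨(b, u), ⟨Finset.mem_univ _, ih.mpr (by simpa using hl)⟩, rfl⟩

lemma sum_allLists [DecidableEq A] (P : A → A → ℝ) (hrow : ∀ a, ∑ b, P a b = 1)
    (n : ℕ) (a : A) : ∑ t ∈ allLists A n, condProb P a t = 1 := by
  induction n generalizing a with
  | zero => simp [allLists, condProb]
  | succ n ih =>
    rw [allLists, Finset.sum_image (by rintro ⟨b, u⟩ - ⟨b', u'⟩ - h; simpa using h)]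
    rw [Finset.sum_product]
    simp only [condProb]
    calc ∑ b, ∑ u ∈ allLists A n, P a b * condProb P b u
        = ∑ b, P a b * ∑ u ∈ allLists A n, condProb P b u := by
          simp [Finset.mul_sum]
      _ = ∑ b, P a b := by simp [ih]
      _ = 1 := hrow a

lemma condProb_nonneg {P : A → A → ℝ} {δ : ℝ} (hδ : 0 < δ) (hmin : ∀ a b, δ ≤ P a b)
    (a : A) (t : List A) : 0 ≤ condProb P a t := by
  induction t generalizing a with
  | nil => norm_num [condProb]
  | cons b l ih => exact mul_nonneg (le_trans hδ.le (hmin a b)) (ih b)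

lemma condProb_le {P : A → A → ℝ} {δ : ℝ} (hδ : 0 < δ) (hδ1 : δ < 1)
    (hmin : ∀ a b, δ ≤ P a b) (hmax : ∀ a b, P a b ≤ 1 - δ)
    (a : A) (t : List A) : condProb P a t ≤ (1 - δ) ^ t.length := by
  induction t generalizing a with
  | nil => simp [condProb]
  | cons b l ih =>
    simp only [condProb, List.length_cons, pow_succ]
    rw [mul_comm ((1 - δ) ^ l.length)]
    exact mul_le_mul (hmax a b) (ih b) (condProb_nonneg hδ hmin b l) (by linarith)

lemma condProb_append (P : A → A → ℝ) (a : A) (t u : List A) :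
    condProb P a (t ++ u)
      = condProb P a t * condProb P ((a :: t).getLast (by simp)) u := by
  induction t generalizing a with
  | nil => simp [condProb]
  | cons b l ih =>
    simp only [List.cons_append, condProb, mul_assoc]
    rw [List.getLast_cons (by simp : (b :: l) ≠ [])]
    congr 1
    exact ih b

end StmtAux

/-- The level set `S_j^a = { t : (1-δ)^{j+1} < P(t|t₁=a) ≤ (1-δ)^j }` has cardinality at
most `(1-δ)^{-(j+1)}`. -/
theorem stmt_3 {A : Type*} [Fintype A] (P : A → A → ℝ) (δ : ℝ)
    (hδ : 0 < δ) (hδ1 : δ < 1)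
    (hmin : ∀ a b, δ ≤ P a b) (hmax : ∀ a b, P a b ≤ 1 - δ)
    (hrow : ∀ a, ∑ b, P a b = 1) (j : ℕ) (a : A) :
    let S : Set (List A) :=
      {t | (1 - δ) ^ (j + 1) < condProb P a t ∧ condProb P a t ≤ (1 - δ) ^ j}
    S.Finite ∧ (Nat.card S : ℝ) ≤ ((1 - δ) ^ (j + 1))⁻¹ := by
  classical
  intro S
  have hb0 : 0 < 1 - δ := by linarith
  have hb1 : 1 - δ < 1 := by linarith
  have hc : 0 < (1 - δ) ^ (j + 1) := pow_pos hb0 _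
  set c := (1 - δ) ^ (j + 1) with hcdef
  -- length bound
  have hlen : ∀ t : List A, t ∈ S → t.length ≤ j := by
    intro t ht
    have h1 := StmtAux.condProb_le hδ hδ1 hmin hmax a t
    have h2 : c < (1 - δ) ^ t.length := lt_of_lt_of_le ht.1 h1
    have := (pow_lt_pow_iff_right_of_lt_one₀ hb0 hb1).mp h2
    omega
  -- S as a finset
  set Sfin : Finset (List A) :=
    ((Finset.range (j + 1)).biUnion (StmtAux.allLists A)).filter
      (fun t => c < condProb P a t ∧ condProb P a t ≤ (1 - δ) ^ j) with hSfin
  have hScoe : S = ↑Sfin := by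
    ext t
    simp only [hSfin, Finset.coe_filter, Finset.mem_biUnion, Finset.mem_range,
      StmtAux.mem_allLists, Set.mem_setOf_eq]
    constructor
    · intro ht
      exact ⟨⟨t.length, by have := hlen t ht; omega, rfl⟩, ht⟩
    · rintro ⟨-, h⟩; exact h
  have hfin : S.Finite := hScoe ▸ Sfin.finite_toSet
  refine ⟨hfin, ?_⟩
  -- antichain property
  have hpref : ∀ t ∈ Sfin, ∀ t' ∈ Sfin, t <+: t' → t = t' := by
    intro t ht t' ht' hp
    by_contra hne
    obtain ⟨u, rfl⟩ := hp
    have hu : u ≠ [] := by rintro rfl; simp at hne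
    have hul : 1 ≤ u.length := List.length_pos_iff.mpr hu
    simp only [hSfin, Finset.mem_filter] at ht ht'
    have h1 : condProb P a (t ++ u)
        = condProb P a t * condProb P ((a :: t).getLast (by simp)) u :=
      StmtAux.condProb_append P a t u
    have h2 : condProb P ((a :: t).getLast (by simp)) u ≤ (1 - δ) ^ u.length :=
      StmtAux.condProb_le hδ hδ1 hmin hmax _ u
    have h3 : (1 - δ) ^ u.length ≤ 1 - δ := by
      calc (1 - δ) ^ u.length ≤ (1 - δ) ^ 1 := pow_le_pow_of_le_one hb0.le hb1.le hul
        _ = 1 - δ := pow_one _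
    have h4 : condProb P a (t ++ u) ≤ (1 - δ) ^ j * (1 - δ) := by
      rw [h1]
      exact mul_le_mul ht.2.2 (h2.trans h3) (StmtAux.condProb_nonneg hδ hmin _ u)
        (pow_nonneg hb0.le _)
    have : condProb P a (t ++ u) ≤ c := by
      rw [hcdef, pow_succ]; exact h4
    exact absurd ht'.2.1 (not_lt.mpr this)
  -- extension sets
  set E : List A → Finset (List A) :=
    fun t => (StmtAux.allLists A (j - t.length)).image (fun u => t ++ u) with hE
  have hEsub : ∀ t ∈ Sfin, E t ⊆ StmtAux.allLists A j := by
    intro t ht v hv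
    simp only [hE, Finset.mem_image] at hv
    obtain ⟨u, hu, rfl⟩ := hv
    rw [StmtAux.mem_allLists] at hu ⊢
    have hlt : t.length ≤ j := by
      have : t ∈ S := by rw [hScoe]; exact ht
      exact hlen t this
    simp [hu]; omega
  have hEdisj : ∀ t ∈ Sfin, ∀ t' ∈ Sfin, t ≠ t' → Disjoint (E t) (E t') := by
    intro t ht t' ht' hne
    rw [Finset.disjoint_left]
    intro v hv hv'
    simp only [hE, Finset.mem_image] at hv hv'
    obtain ⟨u, -, rfl⟩ := hv
    obtain ⟨u', -, he⟩ := hv'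
    have hp : t' <+: t ++ u := ⟨u', he⟩
    have hp2 : t <+: t ++ u := ⟨u, rfl⟩
    rcases List.prefix_or_prefix_of_prefix hp2 hp with h | h
    · exact hne (hpref t ht t' ht' h)
    · exact hne (hpref t' ht' t ht h).symm
  have hEsum : ∀ t ∈ Sfin, ∑ v ∈ E t, condProb P a v = condProb P a t := by
    intro t ht
    rw [hE]
    rw [Finset.sum_image (fun u _ u' _ h => List.append_cancel_left h)]
    calc ∑ u ∈ StmtAux.allLists A (j - t.length), condProb P a (t ++ u)
        = ∑ u ∈ StmtAux.allLists A (j - t.length),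
            condProb P a t * condProb P ((a :: t).getLast (by simp)) u := by
          refine Finset.sum_congr rfl fun u _ => ?_
          exact StmtAux.condProb_append P a t u
      _ = condProb P a t * ∑ u ∈ StmtAux.allLists A (j - t.length),
            condProb P ((a :: t).getLast (by simp)) u := by rw [Finset.mul_sum]
      _ = condProb P a t := by rw [StmtAux.sum_allLists P hrow]; ring
  -- the key sum bound
  have hsum1 : ∑ t ∈ Sfin, condProb P a t ≤ 1 := by
    have h1 : ∑ t ∈ Sfin, condProb P a t = ∑ v ∈ Sfin.biUnion E, condProb P a v := by
      rw [Finset.sum_biUnion ?_]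
      · exact (Finset.sum_congr rfl fun t ht => (hEsum t ht).symm)
      · intro t ht t' ht' hne
        exact hEdisj t ht t' ht' hne
    rw [h1]
    have h2 : Sfin.biUnion E ⊆ StmtAux.allLists A j := by
      intro v hv
      rw [Finset.mem_biUnion] at hv
      obtain ⟨t, ht, hv⟩ := hv
      exact hEsub t ht hv
    calc ∑ v ∈ Sfin.biUnion E, condProb P a v
        ≤ ∑ v ∈ StmtAux.allLists A j, condProb P a v :=
          Finset.sum_le_sum_of_subset_of_nonneg h2
            (fun v _ _ => StmtAux.condProb_nonneg hδ hmin a v)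
      _ = 1 := StmtAux.sum_allLists P hrow j a
  -- conclude
  have hcard : (Sfin.card : ℝ) * c ≤ 1 := by
    calc (Sfin.card : ℝ) * c = ∑ _t ∈ Sfin, c := by
          rw [Finset.sum_const, nsmul_eq_mul]
      _ ≤ ∑ t ∈ Sfin, condProb P a t := by
          refine Finset.sum_le_sum fun t ht => ?_
          simp only [hSfin, Finset.mem_filter] at ht
          exact ht.2.1.le
      _ ≤ 1 := hsum1
  have hNcard : Nat.card S = Sfin.card := by
    rw [hScoe]; simp [Nat.card_eq_fintype_card]
  rw [hNcard, inv_eq_one_div, le_div_iff₀ hc]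
  exact hcard
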